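/- arXiv:1604.06837 — 6 statements merged into one kernel-verified Lean document; each statement's English description precedes it below -/
import Mathlib

section
/- Convex envelope of a bilinear monomial (McCormick hull): Let f(x,y) = −xy on Γ = [0,1] × [ℓ,u] with ℓ ≤ u. Then the convex envelope of f on Γ is g(x,y) = max{−ux, ℓ − ℓx − y}. In particular g is convex on Γ, g ≤ f on Γ, and any convex function h on Γ with h ≤ f satisfies h ≤ g. -/
/-!
Along the vertical edges `x = 0` and `x = 1` the function `-x*y` is affine in `y` (it is `0` and
`-y`), so convexity bounds any minorant `h` at `(x, (1-x)*y₀ + x*y₁)` by `-(x*y₁)`. Taking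
`y₁ = u` where the point lies above the diagonal from `(0, ℓ)` to `(1, u)`, and `y₀ = ℓ` where it
lies below, gives the two affine pieces of the McCormick hull `g`, which is itself a convex
minorant of `-x*y`.
-/

open Set

theorem convexOn_affine {s : Set (ℝ × ℝ)} (hs : Convex ℝ s) (a b c : ℝ) :
    ConvexOn ℝ s fun z => a + b * z.1 + c * z.2 :=
  ((convexOn_const a hs).add ((b • LinearMap.fst ℝ ℝ ℝ + c • LinearMap.snd ℝ ℝ ℝ).convexOn hs)).congr
    fun z _ => by simp [add_assoc]

theorem exists_mem_Icc_mul_add_eq {ℓ u : ℝ} (hlu : ℓ ≤ u) {s c y : ℝ}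
    (hy : y ∈ Icc (s * ℓ + c) (s * u + c)) : ∃ w ∈ Icc ℓ u, s * w + c = y :=
  intermediate_value_Icc hlu (by fun_prop) hy

section McCormick

variable {ℓ u : ℝ}

theorem neg_mul_le_neg_mul_of_mem_Icc {x y : ℝ} (hx : x ∈ Icc (0 : ℝ) 1) (hy : y ∈ Icc ℓ u) :
    -(u * x) ≤ -(x * y) := by
  nlinarith [mul_nonneg hx.1 (sub_nonneg.2 hy.2)]

theorem sub_sub_le_neg_mul_of_mem_Icc {x y : ℝ} (hx : x ∈ Icc (0 : ℝ) 1) (hy : y ∈ Icc ℓ u) :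
    ℓ - ℓ * x - y ≤ -(x * y) := by
  nlinarith [mul_nonneg (sub_nonneg.2 hx.2) (sub_nonneg.2 hy.1)]

theorem ConvexOn.le_neg_mul_of_le_neg_mul {h : ℝ × ℝ → ℝ}
    (hh : ConvexOn ℝ (Icc 0 1 ×ˢ Icc ℓ u) h)
    (hle : ∀ z ∈ Icc 0 1 ×ˢ Icc ℓ u, h z ≤ -(z.1 * z.2))
    {x y₀ y₁ : ℝ} (hx : x ∈ Icc (0 : ℝ) 1) (hy₀ : y₀ ∈ Icc ℓ u) (hy₁ : y₁ ∈ Icc ℓ u) :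
    h (x, (1 - x) * y₀ + x * y₁) ≤ -(x * y₁) := by
  have hmem₀ : ((0 : ℝ), y₀) ∈ Icc 0 1 ×ˢ Icc ℓ u := ⟨⟨le_rfl, zero_le_one⟩, hy₀⟩
  have hmem₁ : ((1 : ℝ), y₁) ∈ Icc 0 1 ×ˢ Icc ℓ u := ⟨⟨zero_le_one, le_rfl⟩, hy₁⟩
  have h₀ : h (0, y₀) ≤ 0 := by simpa using hle _ hmem₀
  have h₁ : h (1, y₁) ≤ -y₁ := by simpa using hle _ hmem₁
  have hcomb : (1 - x) • ((0 : ℝ), y₀) + x • ((1 : ℝ), y₁) = (x, (1 - x) * y₀ + x * y₁) := by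
    ext <;> simp
  calc h (x, (1 - x) * y₀ + x * y₁)
      = h ((1 - x) • ((0 : ℝ), y₀) + x • ((1 : ℝ), y₁)) := by rw [hcomb]
    _ ≤ (1 - x) * h (0, y₀) + x * h (1, y₁) :=
      hh.2 hmem₀ hmem₁ (sub_nonneg.2 hx.2) hx.1 (sub_add_cancel 1 x)
    _ ≤ (1 - x) * 0 + x * -y₁ :=
      add_le_add (mul_le_mul_of_nonneg_left h₀ (sub_nonneg.2 hx.2))
        (mul_le_mul_of_nonneg_left h₁ hx.1)
    _ = -(x * y₁) := by ring

theorem ConvexOn.le_mccormick {h : ℝ × ℝ → ℝ} (hlu : ℓ ≤ u)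
    (hh : ConvexOn ℝ (Icc 0 1 ×ˢ Icc ℓ u) h)
    (hle : ∀ z ∈ Icc 0 1 ×ˢ Icc ℓ u, h z ≤ -(z.1 * z.2))
    {x y : ℝ} (hx : x ∈ Icc (0 : ℝ) 1) (hy : y ∈ Icc ℓ u) :
    h (x, y) ≤ max (-(u * x)) (ℓ - ℓ * x - y) := by
  rcases le_total (ℓ - ℓ * x - y) (-(u * x)) with habove | hbelow
  · obtain ⟨y₀, hy₀, rfl⟩ :=
      exists_mem_Icc_mul_add_eq hlu (s := 1 - x) (c := x * u) ⟨by linarith, by linarith [hy.2]⟩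
    calc h (x, (1 - x) * y₀ + x * u)
        ≤ -(x * u) := hh.le_neg_mul_of_le_neg_mul hle hx hy₀ ⟨hlu, le_rfl⟩
      _ = -(u * x) := by ring
      _ ≤ _ := le_max_left _ _
  · obtain ⟨y₁, hy₁, rfl⟩ :=
      exists_mem_Icc_mul_add_eq hlu (s := x) (c := (1 - x) * ℓ) ⟨by linarith [hy.1], by linarith⟩
    calc h (x, x * y₁ + (1 - x) * ℓ)
        = h (x, (1 - x) * ℓ + x * y₁) := by rw [add_comm]
      _ ≤ -(x * y₁) := hh.le_neg_mul_of_le_neg_mul hle hx ⟨le_rfl, hlu⟩ hy₁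
      _ = ℓ - ℓ * x - (x * y₁ + (1 - x) * ℓ) := by ring
      _ ≤ _ := le_max_right _ _

end McCormick

/-- McCormick hull: the convex envelope of `f(x,y) = -x*y` on
`Γ = [0,1] × [ℓ,u]` is `g(x,y) = max{-u*x, ℓ - ℓ*x - y}`: `g` is convex on `Γ`,
`g ≤ f` on `Γ`, and every convex `h` on `Γ` with `h ≤ f` satisfies `h ≤ g`. -/
theorem mccormick_convex_envelope (ℓ u : ℝ) (hlu : ℓ ≤ u) :
    let Γ : Set (ℝ × ℝ) := Set.Icc (0 : ℝ) 1 ×ˢ Set.Icc ℓ u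
    let f : ℝ × ℝ → ℝ := fun z => -(z.1 * z.2)
    let g : ℝ × ℝ → ℝ := fun z => max (-(u * z.1)) (ℓ - ℓ * z.1 - z.2)
    ConvexOn ℝ Γ g ∧ (∀ z ∈ Γ, g z ≤ f z) ∧
      ∀ h : ℝ × ℝ → ℝ, ConvexOn ℝ Γ h → (∀ z ∈ Γ, h z ≤ f z) → ∀ z ∈ Γ, h z ≤ g z := by
  intro Γ f g
  have hΓ : Convex ℝ Γ := (convex_Icc 0 1).prod (convex_Icc ℓ u)
  refine ⟨?_, fun z hz => ?_, fun h hh hle z hz => hh.le_mccormick hlu hle hz.1 hz.2⟩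
  · exact ((convexOn_affine hΓ 0 (-u) 0).sup (convexOn_affine hΓ ℓ (-ℓ) (-1))).congr
      fun z _ => by simp only [g, Pi.sup_apply]; ring_nf
  · exact max_le (neg_mul_le_neg_mul_of_mem_Icc hz.1 hz.2) (sub_sub_le_neg_mul_of_mem_Icc hz.1 hz.2)
end

section
/- With f(x,y) = −xy on Γ = [0,1] × [ℓ,u], the gap between f and its convex envelope g(x,y) = max{−ux, ℓ − ℓx − y} is at most (u − ℓ)/4 uniformly on Γ; in particular, as u − ℓ → 0, the convex envelope converges uniformly to f. -/
/-- On `Γ = [0,1] × [ℓ,u]`, the gap between `f(x,y) = -x*y` and its convex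
envelope `g(x,y) = max{-u*x, ℓ - ℓ*x - y}` is at most `(u - ℓ)/4` uniformly. -/
theorem mccormick_gap_bound (ℓ u : ℝ) (hlu : ℓ ≤ u) :
    ∀ x ∈ Set.Icc (0 : ℝ) 1, ∀ y ∈ Set.Icc ℓ u,
      -(x * y) - max (-(u * x)) (ℓ - ℓ * x - y) ≤ (u - ℓ) / 4 := by
  rintro x ⟨hx0, hx1⟩ y ⟨hyl, hyu⟩
  rcases le_total (-(u * x)) (ℓ - ℓ * x - y) with h | h
  · rw [max_eq_right h]
    nlinarith [mul_nonneg hx0 (sub_nonneg.2 hyl), sq_nonneg (2*x - 1), mul_nonneg (sub_nonneg.2 hx1) (sub_nonneg.2 hyl)]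
  · rw [max_eq_left h]
    nlinarith [mul_nonneg hx0 (sub_nonneg.2 hyu), sq_nonneg (2*x - 1), mul_nonneg (sub_nonneg.2 hx1) (sub_nonneg.2 hyu)]
end

section
/- Weyl-based lower bound for factor analysis: Let Σ be a symmetric p×p matrix and let u ∈ ℝ^p satisfy φ ≤ u (entrywise) for every φ ∈ F_Σ, where F_Σ = {φ ∈ ℝ^p : φ ≥ 0, Σ − diag(φ) ⪰ 0}. Then for any 0 ≤ r < p, inf_{φ ∈ F_Σ} Σ_{i>r} λᵢ(Σ − diag(φ)) ≥ Σ_{i>r} max{λᵢ(Σ − diag(u)), 0}, where λ₁ ≥ ... ≥ λ_p are sorted eigenvalues. -/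
/-! Weyl monotonicity: if `A - B ⪰ 0` then `λᵢ(B) ≤ λᵢ(A)` for every `i`. Take the span `W` of
the eigenvectors of `B` for its `i + 1` largest eigenvalues and the span `V` of those of `A` for
its `p - i` smallest ones. Since `dim W + dim V > p` they share a unit vector `x`, so
`λᵢ(B) ≤ ⟪B x, x⟫ ≤ ⟪A x, x⟫ ≤ λᵢ(A)`. Here `A = Σ - diag(φ)`, `B = Σ - diag(u)` and
`A - B = diag(u - φ) ⪰ 0` because `u` bounds `F_Σ`; the summands of the left-hand side are then
bounded by eigenvalues of the positive semidefinite `A`, which are nonnegative. -/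

open Matrix

/-- The eigenvalues of a real symmetric matrix, sorted in decreasing order. -/
noncomputable def sortedEig {p : ℕ} {A : Matrix (Fin p) (Fin p) ℝ}
    (hA : A.IsHermitian) : Fin p → ℝ :=
  fun i => hA.eigenvalues (Tuple.sort hA.eigenvalues i.rev)

open Module Submodule
open scoped RealInnerProductSpace

section Eigenbasis

variable {ι E : Type*} [Fintype ι] [NormedAddCommGroup E] [InnerProductSpace ℝ E]
  (b : OrthonormalBasis ι ℝ E)

theorem OrthonormalBasis.inner_eq_zero_of_mem_span_image {S : Set ι} {x : E}
    (hx : x ∈ span ℝ (b '' S)) {j : ι} (hj : j ∉ S) : ⟪b j, x⟫ = 0 := by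
  rw [← b.coe_toBasis, Basis.mem_span_image] at hx
  rw [← b.repr_apply_apply, ← b.coe_toBasis_repr_apply]
  exact Finsupp.notMem_support_iff.mp fun h => hj (hx h)

theorem OrthonormalBasis.finrank_span_image (S : Finset ι) :
    finrank ℝ (span ℝ (b '' S)) = S.card := by
  rw [Set.image_eq_range]
  exact (finrank_span_eq_card (b.orthonormal.linearIndependent.comp _ Subtype.val_injective)).trans
    (Fintype.card_coe S)

variable {b} {T : E →ₗ[ℝ] E} {μ : ι → ℝ}

theorem inner_map_self_sub_mul_norm_sq_eq_sum (hT : T.IsSymmetric)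
    (hb : ∀ j, T (b j) = μ j • b j) {S : Finset ι} {x : E} (hx : x ∈ span ℝ (b '' S)) (c : ℝ) :
    ⟪T x, x⟫ - c * ‖x‖ ^ 2 = ∑ j ∈ S, (μ j - c) * ⟪b j, x⟫ ^ 2 := by
  have hsum : ⟪T x, x⟫ - c * ‖x‖ ^ 2 = ∑ j, (μ j - c) * ⟪b j, x⟫ ^ 2 := by
    rw [← b.sum_sq_inner_right x, ← b.sum_inner_mul_inner (T x) x, Finset.mul_sum,
      ← Finset.sum_sub_distrib]
    refine Finset.sum_congr rfl fun j _ => ?_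
    rw [hT, hb, real_inner_smul_right, real_inner_comm]
    ring
  rw [hsum, ← Finset.sum_subset (Finset.subset_univ S)]
  intro j _ hj
  rw [b.inner_eq_zero_of_mem_span_image hx (by simpa using hj)]
  ring

theorem inner_map_self_le_of_mem_span (hT : T.IsSymmetric) (hb : ∀ j, T (b j) = μ j • b j)
    {S : Finset ι} {c : ℝ} (hc : ∀ j ∈ S, μ j ≤ c) {x : E} (hx : x ∈ span ℝ (b '' S)) :
    ⟪T x, x⟫ ≤ c * ‖x‖ ^ 2 := by
  have hsum := inner_map_self_sub_mul_norm_sq_eq_sum hT hb hx c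
  have hnonpos : ∑ j ∈ S, (μ j - c) * ⟪b j, x⟫ ^ 2 ≤ 0 :=
    Finset.sum_nonpos fun j hj =>
      mul_nonpos_of_nonpos_of_nonneg (sub_nonpos.mpr (hc j hj)) (sq_nonneg _)
  linarith

theorem le_inner_map_self_of_mem_span (hT : T.IsSymmetric) (hb : ∀ j, T (b j) = μ j • b j)
    {S : Finset ι} {c : ℝ} (hc : ∀ j ∈ S, c ≤ μ j) {x : E} (hx : x ∈ span ℝ (b '' S)) :
    c * ‖x‖ ^ 2 ≤ ⟪T x, x⟫ := by
  have hsum := inner_map_self_sub_mul_norm_sq_eq_sum hT hb hx c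
  have hnonneg : 0 ≤ ∑ j ∈ S, (μ j - c) * ⟪b j, x⟫ ^ 2 :=
    Finset.sum_nonneg fun j hj => mul_nonneg (sub_nonneg.mpr (hc j hj)) (sq_nonneg _)
  linarith

end Eigenbasis

theorem le_of_finrank_lt_add_of_norm_sq_bounds {E : Type*} [NormedAddCommGroup E]
    [Module ℝ E] [FiniteDimensional ℝ E] {q : E → ℝ} {W V : Submodule ℝ E}
    (hdim : finrank ℝ E < finrank ℝ W + finrank ℝ V) {c d : ℝ}
    (hW : ∀ x ∈ W, c * ‖x‖ ^ 2 ≤ q x) (hV : ∀ x ∈ V, q x ≤ d * ‖x‖ ^ 2) : c ≤ d := by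
  have hWV : ¬Disjoint W V := fun h => (finrank_add_finrank_le_of_disjoint h).not_gt hdim
  obtain ⟨x, hxW, hxV, hx⟩ : ∃ x ∈ W, x ∈ V ∧ x ≠ 0 := by
    simpa [disjoint_def, not_forall] using hWV
  have hpos : 0 < ‖x‖ ^ 2 := by positivity
  exact le_of_mul_le_mul_right ((hW x hxW).trans (hV x hxV)) hpos

namespace Matrix.IsHermitian

variable {p : ℕ} {A B : Matrix (Fin p) (Fin p) ℝ}

theorem toEuclideanLin_eigenvectorBasis (hA : A.IsHermitian) (j : Fin p) :
    A.toEuclideanLin (hA.eigenvectorBasis j) = hA.eigenvalues j • hA.eigenvectorBasis j := by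
  ext1
  simp [hA.mulVec_eigenvectorBasis]

theorem exists_card_eq_succ_forall_sortedEig_le (hA : A.IsHermitian) (i : Fin p) :
    ∃ S : Finset (Fin p), S.card = i + 1 ∧ ∀ j ∈ S, sortedEig hA i ≤ hA.eigenvalues j := by
  refine ⟨(Finset.Ici i.rev).image (Tuple.sort hA.eigenvalues), ?_, ?_⟩
  · rw [Finset.card_image_of_injective _ (Equiv.injective _), Fin.card_Ici, Fin.val_rev]
    omega
  · simp only [Finset.mem_image, Finset.mem_Ici, forall_exists_index, and_imp]
    rintro _ k hk rfl
    exact Tuple.monotone_sort hA.eigenvalues hk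

theorem exists_card_eq_sub_forall_le_sortedEig (hA : A.IsHermitian) (i : Fin p) :
    ∃ S : Finset (Fin p), S.card = p - i ∧ ∀ j ∈ S, hA.eigenvalues j ≤ sortedEig hA i := by
  refine ⟨(Finset.Iic i.rev).image (Tuple.sort hA.eigenvalues), ?_, ?_⟩
  · rw [Finset.card_image_of_injective _ (Equiv.injective _), Fin.card_Iic, Fin.val_rev]
    omega
  · simp only [Finset.mem_image, Finset.mem_Iic, forall_exists_index, and_imp]
    rintro _ k hk rfl
    exact Tuple.monotone_sort hA.eigenvalues hk

theorem sortedEig_le_of_posSemidef_sub (hA : A.IsHermitian) (hB : B.IsHermitian)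
    (hAB : (A - B).PosSemidef) (i : Fin p) : sortedEig hB i ≤ sortedEig hA i := by
  obtain ⟨S, hS, hSB⟩ := hB.exists_card_eq_succ_forall_sortedEig_le i
  obtain ⟨R, hR, hRA⟩ := hA.exists_card_eq_sub_forall_le_sortedEig i
  have hTA := isSymmetric_toEuclideanLin_iff.mpr hA
  have hTB := isSymmetric_toEuclideanLin_iff.mpr hB
  have hquad : ∀ x, ⟪B.toEuclideanLin x, x⟫ ≤ ⟪A.toEuclideanLin x, x⟫ := fun x => by
    have hx := (isPositive_toEuclideanLin_iff.mpr hAB).inner_nonneg_left x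
    rw [map_sub, LinearMap.sub_apply, inner_sub_left] at hx
    linarith
  refine le_of_finrank_lt_add_of_norm_sq_bounds (q := fun x => ⟪A.toEuclideanLin x, x⟫)
    (W := span ℝ (hB.eigenvectorBasis '' S)) (V := span ℝ (hA.eigenvectorBasis '' R))
    ?_ (fun x hx => ?_) (fun x hx => ?_)
  · rw [OrthonormalBasis.finrank_span_image, OrthonormalBasis.finrank_span_image, hS, hR,
      finrank_euclideanSpace_fin]
    omega
  · exact (le_inner_map_self_of_mem_span hTB hB.toEuclideanLin_eigenvectorBasis hSB hx).trans
      (hquad x)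
  · exact inner_map_self_le_of_mem_span hTA hA.toEuclideanLin_eigenvectorBasis hRA hx

end Matrix.IsHermitian

theorem weyl_fa_lower_bound_general {p : ℕ} (r : ℕ)
    (Sig : Matrix (Fin p) (Fin p) ℝ) (hSig : Sig.IsHermitian) (u : Fin p → ℝ)
    (hub : ∀ φ : Fin p → ℝ, (∀ i, 0 ≤ φ i) →
      (Sig - Matrix.diagonal φ).PosSemidef → ∀ i, φ i ≤ u i) :
    ∀ (φ : Fin p → ℝ), (∀ i, 0 ≤ φ i) →
      ∀ hpsd : (Sig - Matrix.diagonal φ).PosSemidef,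
      ∑ i ∈ Finset.univ.filter (fun i : Fin p => r ≤ (i : ℕ)),
          max (sortedEig (hSig.sub (Matrix.isHermitian_diagonal u)) i) 0 ≤
        ∑ i ∈ Finset.univ.filter (fun i : Fin p => r ≤ (i : ℕ)), sortedEig hpsd.1 i := by
  intro φ hφ hpsd
  have hgap : ((Sig - diagonal φ) - (Sig - diagonal u)).PosSemidef := by
    rw [sub_sub_sub_cancel_left, diagonal_sub]
    exact posSemidef_diagonal_iff.mpr fun i => sub_nonneg.mpr (hub φ hφ hpsd i)
  refine Finset.sum_le_sum fun i _ => max_le ?_ (hpsd.eigenvalues_nonneg _)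
  exact hpsd.1.sortedEig_le_of_posSemidef_sub _ hgap i

/-- Weyl-based lower bound for factor analysis: if `u` is an entrywise upper
bound on the feasible set `F_Σ = {φ ≥ 0 : Σ - diag(φ) ⪰ 0}`, then for every
`φ ∈ F_Σ` and `0 ≤ r < p`, the sum of the `p - r` smallest eigenvalues of
`Σ - diag(φ)` is at least `∑_{i > r} max{λᵢ(Σ - diag(u)), 0}`. -/
theorem weyl_fa_lower_bound {p : ℕ} (r : ℕ) (hr : r < p)
    (Sig : Matrix (Fin p) (Fin p) ℝ) (hSig : Sig.IsHermitian) (u : Fin p → ℝ)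
    (hub : ∀ φ : Fin p → ℝ, (∀ i, 0 ≤ φ i) →
      (Sig - Matrix.diagonal φ).PosSemidef → ∀ i, φ i ≤ u i) :
    ∀ (φ : Fin p → ℝ), (∀ i, 0 ≤ φ i) →
      ∀ hpsd : (Sig - Matrix.diagonal φ).PosSemidef,
      ∑ i ∈ Finset.univ.filter (fun i : Fin p => r ≤ (i : ℕ)),
          max (sortedEig (hSig.sub (Matrix.isHermitian_diagonal u)) i) 0 ≤
        ∑ i ∈ Finset.univ.filter (fun i : Fin p => r ≤ (i : ℕ)), sortedEig hpsd.1 i :=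
  weyl_fa_lower_bound_general r Sig hSig u hub
end

section
/- Let Σ be a symmetric p×p matrix and fix i ∈ {1,...,p}. Then sup{x ∈ ℝ : Σ − x eᵢ eᵢ' ⪰ 0} = inf{m' Σ m : m ∈ ℝ^p, mᵢ = 1}, whenever the supremum is finite and Σ is PSD. -/
/-!
`Σ - x eᵢeᵢᵀ ⪰ 0` says `x mᵢ² ≤ mᵀΣm` for every `m`. For `mᵢ = 0` this is just `Σ ⪰ 0`, and
otherwise, by homogeneity, it suffices to check it when `mᵢ = 1`. So the feasible `x` are exactly
the lower bounds of `{mᵀΣm : mᵢ = 1}`, and the supremum of the lower bounds of a nonempty set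
bounded below is its infimum.
-/

open Matrix

variable {n : Type*} [Fintype n] [DecidableEq n]

lemma Matrix.dotProduct_single_mulVec_self {R : Type*} [CommSemiring R] (i : n) (x : R)
    (m : n → R) : m ⬝ᵥ (single i i x *ᵥ m) = x * m i ^ 2 := by
  rw [single_mulVec_eq, dotProduct_smul, dotProduct_single, smul_eq_mul]
  ring

lemma Matrix.posSemidef_sub_single_iff_mem_lowerBounds {A : Matrix n n ℝ} (hA : A.PosSemidef)
    (i : n) (x : ℝ) :
    (A - single i i x).PosSemidef ↔
      x ∈ lowerBounds {v | ∃ m : n → ℝ, m i = 1 ∧ v = m ⬝ᵥ (A *ᵥ m)} := by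
  simp only [posSemidef_iff_dotProduct_mulVec, star_trivial, sub_mulVec, dotProduct_sub,
    dotProduct_single_mulVec_self, sub_nonneg]
  refine ⟨fun h ↦ ?_, fun hx ↦ ⟨hA.1.sub ?_, fun m ↦ ?_⟩⟩
  · rintro _ ⟨m, hmi, rfl⟩
    simpa [hmi] using h.2 m
  · simp [IsHermitian]
  · rcases eq_or_ne (m i) 0 with hmi | hmi
    · simpa [hmi] using hA.dotProduct_mulVec_nonneg m
    have hle := hx ⟨(m i)⁻¹ • m, by simp [hmi], rfl⟩
    rw [mulVec_smul, dotProduct_smul, smul_dotProduct, smul_eq_mul, smul_eq_mul] at hle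
    calc x * m i ^ 2 ≤ (m i)⁻¹ * ((m i)⁻¹ * (m ⬝ᵥ (A *ᵥ m))) * m i ^ 2 := by gcongr
      _ = m ⬝ᵥ (A *ᵥ m) := by field_simp

theorem diag_perturbation_dual_general {p : ℕ} (Sig : Matrix (Fin p) (Fin p) ℝ)
    (hSig : Sig.PosSemidef) (i : Fin p) :
    sSup {x : ℝ | (Sig - Matrix.single i i x).PosSemidef} =
      sInf {v : ℝ | ∃ m : Fin p → ℝ, m i = 1 ∧ v = m ⬝ᵥ (Sig *ᵥ m)} := by
  simp_rw [posSemidef_sub_single_iff_mem_lowerBounds hSig, Set.ofPred_mem_eq]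
  refine csSup_lowerBounds_eq_csInf ⟨0, ?_⟩ ⟨_, Pi.single i 1, by simp, rfl⟩
  rintro _ ⟨m, -, rfl⟩
  simpa using hSig.dotProduct_mulVec_nonneg m

/-- For a PSD symmetric `Σ` and index `i`, whenever the supremum is finite,
`sup{x : Σ - x eᵢeᵢᵀ ⪰ 0} = inf{mᵀ Σ m : m ∈ ℝ^p, mᵢ = 1}`. -/
theorem diag_perturbation_dual {p : ℕ} (Sig : Matrix (Fin p) (Fin p) ℝ)
    (hSig : Sig.PosSemidef) (i : Fin p)
    (hbdd : BddAbove {x : ℝ | (Sig - Matrix.single i i x).PosSemidef}) :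
    sSup {x : ℝ | (Sig - Matrix.single i i x).PosSemidef} =
      sInf {v : ℝ | ∃ m : Fin p → ℝ, m i = 1 ∧ v = m ⬝ᵥ (Sig *ᵥ m)} :=
  diag_perturbation_dual_general Sig hSig i
end

section
/- Conditional gradient convergence rate for concave minimization: Let G be a concave function on a convex compact set C ⊆ ℝ^n with supergradients ∇G, and define the iterates W^{(k+1)} ∈ argmin_{W ∈ C} ⟨∇G(W^{(k)}), W⟩. Define Δ(W) = inf_{W' ∈ C} ⟨∇G(W), W' − W⟩ ≤ 0. Then the sequence G(W^{(k)}) is monotone nonincreasing, and min_{i=1,...,K} (−Δ(W^{(i)})) ≤ (G(W^{(1)}) − G_inf)/K, where G_inf is any lower bound on {G(W^{(k)})}. -/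
open Matrix

/-- Conditional-gradient convergence rate for minimizing a concave function `G`
(with supergradients `gradG`) over a convex compact set `C ⊆ ℝⁿ`: the iterates
`W^{(k+1)} ∈ argmin_{V ∈ C} ⟨gradG(W^{(k)}), V⟩` give a nonincreasing sequence
`G(W^{(k)})`, and with `Δ(W) = inf_{W' ∈ C} ⟨gradG(W), W' - W⟩`,
`min_{1 ≤ i ≤ K} (-Δ(W^{(i)})) ≤ (G(W^{(1)}) - G_inf)/K` for any lower bound
`G_inf` of the iterate values. -/
theorem conditional_gradient_rate {n : ℕ}
    (C : Set (Fin n → ℝ)) (hC : Convex ℝ C) (hcomp : IsCompact C) (hne : C.Nonempty)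
    (G : (Fin n → ℝ) → ℝ) (gradG : (Fin n → ℝ) → (Fin n → ℝ))
    (hsuper : ∀ W ∈ C, ∀ W' ∈ C, G W' ≤ G W + gradG W ⬝ᵥ (W' - W))
    (Wseq : ℕ → (Fin n → ℝ)) (hmem : ∀ k, Wseq k ∈ C)
    (hstep : ∀ k, ∀ V ∈ C, gradG (Wseq k) ⬝ᵥ Wseq (k + 1) ≤ gradG (Wseq k) ⬝ᵥ V) :
    let Δ : (Fin n → ℝ) → ℝ := fun W => sInf {t : ℝ | ∃ W' ∈ C, t = gradG W ⬝ᵥ (W' - W)}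
    (Antitone fun k => G (Wseq k)) ∧
      ∀ K : ℕ, 0 < K → ∀ Ginf : ℝ, (∀ k, Ginf ≤ G (Wseq k)) →
        ∃ i, 1 ≤ i ∧ i ≤ K ∧ -Δ (Wseq i) ≤ (G (Wseq 1) - Ginf) / K := by
  intro Δ
  -- Δ at an iterate is attained at the next iterate
  have hΔeq : ∀ k, Δ (Wseq k) = gradG (Wseq k) ⬝ᵥ (Wseq (k + 1) - Wseq k) := by
    intro k
    apply IsLeast.csInf_eq
    constructor
    · exact ⟨Wseq (k + 1), hmem _, rfl⟩
    · rintro t ⟨W', hW', rfl⟩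
      simp only [dotProduct_sub]
      have := hstep k W' hW'
      linarith
  have hΔle : ∀ k, Δ (Wseq k) ≤ 0 := by
    intro k
    rw [hΔeq k]
    simp only [dotProduct_sub]
    have := hstep k (Wseq k) (hmem k)
    linarith
  -- descent inequality
  have hdesc : ∀ k, G (Wseq (k + 1)) ≤ G (Wseq k) + Δ (Wseq k) := by
    intro k
    rw [hΔeq k]
    exact hsuper (Wseq k) (hmem k) (Wseq (k + 1)) (hmem (k + 1))
  have hmono : Antitone fun k => G (Wseq k) := by
    apply antitone_nat_of_succ_le
    intro k
    have := hdesc k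
    have := hΔle k
    simpa using by linarith
  refine ⟨hmono, ?_⟩
  intro K hK Ginf hGinf
  -- telescoping sum
  have htel : ∑ i ∈ Finset.range K, (-Δ (Wseq (i + 1)))
      ≤ G (Wseq 1) - Ginf := by
    have h1 : ∑ i ∈ Finset.range K, (-Δ (Wseq (i + 1)))
        ≤ ∑ i ∈ Finset.range K, (G (Wseq (i + 1)) - G (Wseq (i + 2))) := by
      apply Finset.sum_le_sum
      intro i _
      have := hdesc (i + 1)
      linarith
    have h2 : ∑ i ∈ Finset.range K, (G (Wseq (i + 1)) - G (Wseq (i + 2)))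
        = G (Wseq 1) - G (Wseq (K + 1)) := by
      have := Finset.sum_range_sub' (f := fun i => G (Wseq (i + 1))) K
      simpa using this
    have h3 := hGinf (K + 1)
    linarith
  -- pick the index minimizing -Δ
  obtain ⟨m, hm, hmin⟩ := Finset.exists_min_image (Finset.range K)
    (fun i => -Δ (Wseq (i + 1))) ⟨0, Finset.mem_range.mpr hK⟩
  refine ⟨m + 1, Nat.succ_le_succ (Nat.zero_le m), Nat.succ_le_of_lt (Finset.mem_range.mp hm), ?_⟩
  have hKsum : (K : ℝ) * (-Δ (Wseq (m + 1))) ≤ ∑ i ∈ Finset.range K, (-Δ (Wseq (i + 1))) := by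
    calc (K : ℝ) * (-Δ (Wseq (m + 1)))
        = ∑ _i ∈ Finset.range K, (-Δ (Wseq (m + 1))) := by
          rw [Finset.sum_const, Finset.card_range, nsmul_eq_mul]
      _ ≤ ∑ i ∈ Finset.range K, (-Δ (Wseq (i + 1))) :=
          Finset.sum_le_sum fun i hi => hmin i hi
  have hKpos : (0 : ℝ) < K := Nat.cast_pos.mpr hK
  rw [le_div_iff₀ hKpos]
  calc -Δ (Wseq (m + 1)) * K = K * (-Δ (Wseq (m + 1))) := by ring
    _ ≤ _ := hKsum
    _ ≤ _ := htel
end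

section
/- Equivalence of the rank-constrained FA problem with its trace reformulation: For a PSD p×p matrix Σ, 0 ≤ r < p and q ≥ 1, the minimum of ‖Σ − Θ − Φ‖_q^q over PSD Θ with rank(Θ) ≤ r and diagonal Φ ⪰ 0 with Σ − Φ ⪰ 0, equals the minimum of Tr(W (Σ − Φ)^q) over diagonal Φ ⪰ 0 with Σ − Φ ⪰ 0 and symmetric W with 0 ⪯ W ⪯ I and Tr(W) = p − r. -/
open Matrix

/-- The `q`-th power of a real symmetric PSD matrix, via its eigendecomposition. -/
noncomputable def matrixRpow {p : ℕ} {A : Matrix (Fin p) (Fin p) ℝ}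
    (hA : A.IsHermitian) (q : ℝ) : Matrix (Fin p) (Fin p) ℝ :=
  (hA.eigenvectorUnitary : Matrix (Fin p) (Fin p) ℝ) *
    Matrix.diagonal (fun i => hA.eigenvalues i ^ q) *
    star (hA.eigenvectorUnitary : Matrix (Fin p) (Fin p) ℝ)

/-!
Fix a feasible `Φ` and put `S = Σ - Φ ⪰ 0` with eigenvalues `λ₁ ≤ ⋯ ≤ λ_p`. Both inner problems
have the optimal value `∑_{j ≤ p - r} λ_j ^ q`, so the two outer infima over `Φ` agree.

On the left (Eckart–Young–Mirsky): if `rank Θ ≤ r`, then `λ_j(S) ≤ λ_{j+r}(S - Θ)` (Weyl), because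
a nonzero vector of `ker Θ` orthogonal to the eigenvectors of `S` below `λ_j(S)` and to those of
`S - Θ` above `λ_{j+r}(S - Θ)` exists by counting dimensions, and its Rayleigh quotients for `S`
and `S - Θ` coincide. Matching `j ↦ j + r` bounds `‖S - Θ‖_q^q` from below, and deleting the `r`
largest eigenvalues of `S` attains the bound.

On the right (Ky Fan): with `S^q = V diag(λ^q) Vᵀ`, the diagonal `t` of `Vᵀ W V` satisfies
`0 ≤ t ≤ 1` and `∑ t = p - r`, and `∑ t_j λ_j^q ≥ ∑_{j ≤ p - r} λ_j^q` because every term of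
`∑ (t_j - [j ≤ p - r]) (λ_j^q - τ)` is nonnegative for a threshold `τ` between `λ_{p-r}^q` and
`λ_{p-r+1}^q`. The projection onto the bottom `p - r` eigenvectors attains the bound.
-/

open Finset

namespace Matrix

section ConjDiagonal

variable {n : Type*} [Fintype n] [DecidableEq n] {U : Matrix n n ℝ}

theorem conj_diagonal_mul_conj_diagonal (hU : U ∈ unitaryGroup n ℝ) (d e : n → ℝ) :
    U * diagonal d * star U * (U * diagonal e * star U) = U * diagonal (d * e) * star U := by
  calc _ = U * diagonal d * (star U * U) * diagonal e * star U := by simp only [Matrix.mul_assoc]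
    _ = _ := by
      rw [mem_unitaryGroup_iff'.mp hU, Matrix.mul_one, Matrix.mul_assoc U, diagonal_mul_diagonal]
      rfl

theorem trace_conj_diagonal (hU : U ∈ unitaryGroup n ℝ) (d : n → ℝ) :
    (U * diagonal d * star U).trace = ∑ i, d i := by
  rw [trace_mul_cycle, mem_unitaryGroup_iff'.mp hU, Matrix.one_mul, trace_diagonal]

theorem trace_star_mul_mul (hU : U ∈ unitaryGroup n ℝ) (W : Matrix n n ℝ) :
    (star U * W * U).trace = W.trace := by
  rw [trace_mul_cycle, mem_unitaryGroup_iff.mp hU, Matrix.one_mul]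

theorem one_sub_conj_diagonal (hU : U ∈ unitaryGroup n ℝ) (d : n → ℝ) :
    1 - U * diagonal d * star U = U * diagonal (1 - d) * star U := by
  have h1 : diagonal (1 - d) = 1 - diagonal d := by rw [← diagonal_one, diagonal_sub]; rfl
  rw [h1, Matrix.mul_sub, Matrix.sub_mul, Matrix.mul_one, mem_unitaryGroup_iff.mp hU]

theorem posSemidef_conj_diagonal (U : Matrix n n ℝ) {d : n → ℝ} (hd : ∀ i, 0 ≤ d i) :
    (U * diagonal d * star U).PosSemidef :=
  (posSemidef_diagonal_iff.mpr hd).mul_mul_conjTranspose_same U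

theorem trace_mul_conj_diagonal (W : Matrix n n ℝ) (d : n → ℝ) :
    (W * (U * diagonal d * star U)).trace = ∑ i, (star U * W * U) i i * d i := by
  rw [← Matrix.mul_assoc, trace_mul_cycle, ← Matrix.mul_assoc]
  simp [trace, mul_diagonal]

theorem dotProduct_mulVec_conj_diagonal (d : n → ℝ) (x : n → ℝ) :
    x ⬝ᵥ (U * diagonal d * star U) *ᵥ x = ∑ i, d i * (star U *ᵥ x) i ^ 2 := by
  rw [← mulVec_mulVec, ← mulVec_mulVec, dotProduct_mulVec, star_eq_conjTranspose,
    conjTranspose_eq_transpose_of_trivial, ← mulVec_transpose]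
  simp only [dotProduct, mulVec_diagonal]
  exact Finset.sum_congr rfl fun i _ => by ring

theorem dotProduct_self_eq_sum_sq (hU : U ∈ unitaryGroup n ℝ) (x : n → ℝ) :
    x ⬝ᵥ x = ∑ i, (star U *ᵥ x) i ^ 2 := by
  have h := dotProduct_mulVec_conj_diagonal (U := U) 1 x
  simp only [Pi.one_apply, one_mul] at h
  rwa [show diagonal (1 : n → ℝ) = 1 from diagonal_one, Matrix.mul_one,
    mem_unitaryGroup_iff.mp hU, one_mulVec] at h

theorem diag_conj_nonneg_and_le_one {W : Matrix n n ℝ} (hW : W.PosSemidef)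
    (hW1 : (1 - W).PosSemidef) (hU : U ∈ unitaryGroup n ℝ) (i : n) :
    0 ≤ (star U * W * U) i i ∧ (star U * W * U) i i ≤ 1 := by
  have h1 := (hW1.conjTranspose_mul_mul_same U).diag_nonneg (i := i)
  rw [Matrix.mul_sub, Matrix.sub_mul, Matrix.mul_one, ← star_eq_conjTranspose,
    mem_unitaryGroup_iff'.mp hU] at h1
  refine ⟨(hW.conjTranspose_mul_mul_same U).diag_nonneg, ?_⟩
  simpa [star_eq_conjTranspose] using h1

theorem submatrix_mem_unitaryGroup (hU : U ∈ unitaryGroup n ℝ) (σ : Equiv.Perm n) :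
    U.submatrix id σ ∈ unitaryGroup n ℝ := by
  rw [mem_unitaryGroup_iff', star_eq_conjTranspose, conjTranspose_submatrix,
    ← submatrix_mul _ _ _ _ _ Function.bijective_id, ← star_eq_conjTranspose,
    mem_unitaryGroup_iff'.mp hU, submatrix_one_equiv]

theorem conj_diagonal_submatrix (U : Matrix n n ℝ) (σ : Equiv.Perm n) (d : n → ℝ) :
    U.submatrix id σ * diagonal (d ∘ σ) * star (U.submatrix id σ) = U * diagonal d * star U := by
  rw [← submatrix_diagonal_equiv, star_eq_conjTranspose, conjTranspose_submatrix,
    submatrix_mul_equiv, submatrix_mul_equiv, submatrix_id_id, star_eq_conjTranspose]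

open Polynomial in
theorem IsHermitian.sum_comp_eigenvalues_of_eq_conj_diagonal {A : Matrix n n ℝ}
    (hA : A.IsHermitian) (hU : U ∈ unitaryGroup n ℝ) {d : n → ℝ}
    (h : A = U * diagonal d * star U) (f : ℝ → ℝ) :
    ∑ i, f (hA.eigenvalues i) = ∑ i, f (d i) := by
  have hcharpoly : A.charpoly = (diagonal d).charpoly := by
    rw [h, charpoly_mul_comm, ← Matrix.mul_assoc, mem_unitaryGroup_iff'.mp hU, Matrix.one_mul]
  have hroots : univ.val.map hA.eigenvalues = univ.val.map d := by
    have h := hA.roots_charpoly_eq_eigenvalues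
    rw [hcharpoly, charpoly_diagonal,
      roots_prod _ _ (prod_ne_zero_iff.mpr fun i _ => X_sub_C_ne_zero _)] at h
    simpa using h.symm
  have h := congrArg (fun s => (s.map f).sum) hroots
  simp only [Multiset.map_map] at h
  exact h

end ConjDiagonal

section Weyl

variable {n : Type*} [Fintype n]

theorem exists_ne_zero_mulVec_eq_zero_of_card_add_card_add_rank_lt (Θ P Q : Matrix n n ℝ)
    (A B : Finset n) (h : #A + #B + Θ.rank < Fintype.card n) :
    ∃ x ≠ 0, Θ *ᵥ x = 0 ∧ (∀ i ∈ A, (P *ᵥ x) i = 0) ∧ ∀ i ∈ B, (Q *ᵥ x) i = 0 := by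
  let L := ((LinearMap.funLeft ℝ ℝ ((↑) : A → n) ∘ₗ P.mulVecLin).prod
    (LinearMap.funLeft ℝ ℝ ((↑) : B → n) ∘ₗ Q.mulVecLin)) ∘ₗ (LinearMap.ker Θ.mulVecLin).subtype
  have hdim : Module.finrank ℝ ((A → ℝ) × (B → ℝ)) <
      Module.finrank ℝ (LinearMap.ker Θ.mulVecLin) := by
    have := LinearMap.finrank_range_add_finrank_ker Θ.mulVecLin
    rw [Module.finrank_fintype_fun_eq_card] at this
    rw [Module.finrank_prod, Module.finrank_fintype_fun_eq_card,
      Module.finrank_fintype_fun_eq_card, Fintype.card_coe, Fintype.card_coe]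
    change Θ.rank + _ = _ at this
    omega
  obtain ⟨⟨x, hΘx⟩, hLx, hx0⟩ :=
    (Submodule.ne_bot_iff _).mp (LinearMap.ker_ne_bot_of_finrank_lt (f := L) hdim)
  exact ⟨x, fun h => hx0 (by simp [h]), by simpa using hΘx,
    by simpa [L, Function.prod, funext_iff] using hLx⟩

variable [DecidableEq n]

theorem le_of_card_add_card_add_rank_lt {S Θ U V : Matrix n n ℝ} {d e : n → ℝ}
    (hU : U ∈ unitaryGroup n ℝ) (hV : V ∈ unitaryGroup n ℝ)
    (hS : S = U * diagonal d * star U) (hSΘ : S - Θ = V * diagonal e * star V) {a b : ℝ}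
    (h : #{i | d i < a} + #{i | b < e i} + Θ.rank < Fintype.card n) : a ≤ b := by
  obtain ⟨x, hx0, hΘx, hUx, hVx⟩ :=
    exists_ne_zero_mulVec_eq_zero_of_card_add_card_add_rank_lt Θ (star U) (star V) _ _ h
  have hlow : a * (x ⬝ᵥ x) ≤ x ⬝ᵥ S *ᵥ x := by
    rw [dotProduct_self_eq_sum_sq hU, hS, dotProduct_mulVec_conj_diagonal, mul_sum]
    refine sum_le_sum fun i _ => ?_
    by_cases hi : d i < a
    · simp [hUx i (by simpa using hi)]
    · exact mul_le_mul_of_nonneg_right (not_lt.mp hi) (sq_nonneg _)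
  have hup : x ⬝ᵥ (S - Θ) *ᵥ x ≤ b * (x ⬝ᵥ x) := by
    rw [dotProduct_self_eq_sum_sq hV, hSΘ, dotProduct_mulVec_conj_diagonal, mul_sum]
    refine sum_le_sum fun i _ => ?_
    by_cases hi : b < e i
    · simp [hVx i (by simpa using hi)]
    · exact mul_le_mul_of_nonneg_right (not_lt.mp hi) (sq_nonneg _)
  have hker : x ⬝ᵥ (S - Θ) *ᵥ x = x ⬝ᵥ S *ᵥ x := by rw [sub_mulVec, hΘx, sub_zero]
  have hpos : 0 < x ⬝ᵥ x := by simpa using dotProduct_star_self_pos_iff.mpr hx0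
  exact le_of_mul_le_mul_right (hlow.trans (hker ▸ hup)) hpos

end Weyl

section Sorted

variable {p : ℕ}

theorem sum_filter_lt_le_sum_mul {k : ℕ} (hk : k ≤ p) {d t : Fin p → ℝ} (hd : Monotone d)
    (ht0 : ∀ i, 0 ≤ t i) (ht1 : ∀ i, t i ≤ 1) (ht : ∑ i, t i = k) :
    ∑ i with i.val < k, d i ≤ ∑ i, t i * d i := by
  obtain ⟨τ, hτ⟩ : ∃ τ, ∀ i : Fin p, ((i : ℕ) < k → d i ≤ τ) ∧ (k ≤ i → τ ≤ d i) := by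
    rcases p with _ | p
    · exact ⟨0, fun i => i.elim0⟩
    · exact ⟨d ⟨k - 1, by omega⟩, fun i => ⟨fun hi => hd (Fin.le_def.mpr (Nat.le_sub_one_of_lt hi)),
        fun hi => hd (Fin.mk_le_of_le_val (by omega))⟩⟩
  have hcard : ∑ i : Fin p, (if (i : ℕ) < k then (1 : ℝ) else 0) = k := by
    rw [← sum_filter, sum_const, Fin.card_filter_val_lt, min_eq_right hk, nsmul_one]
  have hterm : ∀ i : Fin p, (if (i : ℕ) < k then d i else 0) ≤
      t i * d i - τ * (t i - if (i : ℕ) < k then 1 else 0) := by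
    intro i
    by_cases hi : (i : ℕ) < k
    · simp only [if_pos hi]
      nlinarith [(hτ i).1 hi, ht1 i]
    · simp only [if_neg hi]
      nlinarith [(hτ i).2 (not_lt.mp hi), ht0 i]
  calc ∑ i with i.val < k, d i = ∑ i : Fin p, if (i : ℕ) < k then d i else 0 := sum_filter _ _
    _ ≤ ∑ i : Fin p, (t i * d i - τ * (t i - if (i : ℕ) < k then 1 else 0)) :=
        sum_le_sum fun i _ => hterm i
    _ = ∑ i, t i * d i := by rw [sum_sub_distrib, ← mul_sum, sum_sub_distrib, ht, hcard]; ring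

theorem sum_filter_lt_sub_le_sum {r : ℕ} {f g : Fin p → ℝ} (hg : ∀ i, 0 ≤ g i)
    (hfg : ∀ i j : Fin p, (i : ℕ) + r = j → f i ≤ g j) :
    ∑ i with i.val < p - r, f i ≤ ∑ i, g i := by
  let shift : Fin (p - r) ↪ Fin p :=
    ⟨fun i => ⟨i + r, by omega⟩, fun a b h => by simpa [Fin.ext_iff] using h⟩
  have hlow : ({i | i.val < p - r} : Finset (Fin p)) =
      univ.map (Fin.castLEEmb (p.sub_le r)) := by
    ext i
    simp only [mem_filter, mem_univ, true_and, mem_map, Fin.castLEEmb_apply]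
    exact ⟨fun hi => ⟨⟨i, hi⟩, rfl⟩, fun ⟨j, hj⟩ => hj ▸ j.2⟩
  calc ∑ i with i.val < p - r, f i = ∑ j : Fin (p - r), f (j.castLE (p.sub_le r)) := by
        rw [hlow, sum_map]; rfl
    _ ≤ ∑ j : Fin (p - r), g (shift j) := sum_le_sum fun j _ => hfg _ _ rfl
    _ = ∑ i ∈ univ.map shift, g i := (sum_map _ _ _).symm
    _ ≤ ∑ i, g i := sum_le_univ_sum_of_nonneg hg

theorem le_of_monotone_of_rank_le {S Θ U V : Matrix (Fin p) (Fin p) ℝ} {d e : Fin p → ℝ}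
    (hd : Monotone d) (he : Monotone e) (hU : U ∈ unitaryGroup (Fin p) ℝ)
    (hV : V ∈ unitaryGroup (Fin p) ℝ) (hS : S = U * diagonal d * star U)
    (hSΘ : S - Θ = V * diagonal e * star V) {r : ℕ} (hΘ : Θ.rank ≤ r) {i j : Fin p}
    (hij : (i : ℕ) + r = j) : d i ≤ e j := by
  refine le_of_card_add_card_add_rank_lt hU hV hS hSΘ ?_
  have hlow : #{l | d l < d i} ≤ i := by
    rw [← Fin.card_Iio]
    exact card_le_card fun l hl => mem_Iio.mpr (hd.reflect_lt (mem_filter.mp hl).2)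
  have hhigh : #{l | e j < e l} ≤ p - 1 - j := by
    rw [← Fin.card_Ioi]
    exact card_le_card fun l hl => mem_Ioi.mpr (he.reflect_lt (mem_filter.mp hl).2)
  have := j.2
  rw [Fintype.card_fin]
  omega

end Sorted

namespace IsHermitian

variable {p : ℕ} {A : Matrix (Fin p) (Fin p) ℝ} (hA : A.IsHermitian)

-- `hA.eigenvalues` are in no particular order on `Fin p`; Weyl's inequality needs them sorted.
noncomputable def sortedEigenvalues : Fin p → ℝ :=
  hA.eigenvalues ∘ Tuple.sort hA.eigenvalues

noncomputable def sortedEigenvectorMatrix : Matrix (Fin p) (Fin p) ℝ :=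
  (hA.eigenvectorUnitary : Matrix (Fin p) (Fin p) ℝ).submatrix id (Tuple.sort hA.eigenvalues)

theorem monotone_sortedEigenvalues : Monotone hA.sortedEigenvalues :=
  Tuple.monotone_sort _

theorem sortedEigenvectorMatrix_mem_unitaryGroup :
    hA.sortedEigenvectorMatrix ∈ unitaryGroup (Fin p) ℝ :=
  submatrix_mem_unitaryGroup hA.eigenvectorUnitary.2 _

theorem conj_diagonal_comp_sortedEigenvalues (f : ℝ → ℝ) :
    hA.sortedEigenvectorMatrix * diagonal (f ∘ hA.sortedEigenvalues) *
        star hA.sortedEigenvectorMatrix =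
      hA.eigenvectorUnitary * diagonal (f ∘ hA.eigenvalues) * star hA.eigenvectorUnitary :=
  conj_diagonal_submatrix _ _ (f ∘ hA.eigenvalues)

theorem eq_conj_diagonal_sortedEigenvalues :
    A = hA.sortedEigenvectorMatrix * diagonal hA.sortedEigenvalues *
      star hA.sortedEigenvectorMatrix := by
  have h := hA.conj_diagonal_comp_sortedEigenvalues id
  rw [Function.id_comp, Function.id_comp] at h
  rw [h]
  conv_lhs => rw [hA.spectral_theorem, Unitary.conjStarAlgAut_apply]
  simp [RCLike.ofReal_real_eq_id]

theorem matrixRpow_eq (q : ℝ) :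
    matrixRpow hA q = hA.sortedEigenvectorMatrix * diagonal (fun i => hA.sortedEigenvalues i ^ q) *
      star hA.sortedEigenvectorMatrix :=
  (hA.conj_diagonal_comp_sortedEigenvalues (· ^ q)).symm

noncomputable def sumRpowSmallestEigenvalues (k : ℕ) (q : ℝ) : ℝ :=
  ∑ i with i.val < k, hA.sortedEigenvalues i ^ q

end IsHermitian

variable {p : ℕ} {S : Matrix (Fin p) (Fin p) ℝ}

theorem PosSemidef.sortedEigenvalues_nonneg (hS : S.PosSemidef) (i : Fin p) :
    0 ≤ hS.1.sortedEigenvalues i :=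
  hS.eigenvalues_nonneg _

theorem PosSemidef.sumRpowSmallestEigenvalues_le_sum_abs_rpow (hS : S.PosSemidef) {q : ℝ}
    (hq : 0 ≤ q) {Θ M : Matrix (Fin p) (Fin p) ℝ} {r : ℕ} (hΘ : Θ.rank ≤ r)
    (hM : M.IsHermitian) (hMS : M = S - Θ) :
    hS.1.sumRpowSmallestEigenvalues (p - r) q ≤ ∑ i, |hM.eigenvalues i| ^ q := by
  subst hMS
  rw [← Equiv.sum_comp (Tuple.sort hM.eigenvalues)]
  refine sum_filter_lt_sub_le_sum (fun i => by positivity) fun i j hij => ?_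
  have hweyl := le_of_monotone_of_rank_le hS.1.monotone_sortedEigenvalues
    hM.monotone_sortedEigenvalues hS.1.sortedEigenvectorMatrix_mem_unitaryGroup
    hM.sortedEigenvectorMatrix_mem_unitaryGroup hS.1.eq_conj_diagonal_sortedEigenvalues
    hM.eq_conj_diagonal_sortedEigenvalues hΘ hij
  exact Real.rpow_le_rpow (hS.sortedEigenvalues_nonneg i) (hweyl.trans (le_abs_self _)) hq

theorem PosSemidef.exists_sum_abs_rpow_eq_sumRpowSmallestEigenvalues (hS : S.PosSemidef)
    {q : ℝ} (hq : q ≠ 0) (r : ℕ) :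
    ∃ Θ : Matrix (Fin p) (Fin p) ℝ, Θ.PosSemidef ∧ Θ.rank ≤ r ∧
      ∀ (M : Matrix (Fin p) (Fin p) ℝ) (hM : M.IsHermitian), M = S - Θ →
        ∑ i, |hM.eigenvalues i| ^ q = hS.1.sumRpowSmallestEigenvalues (p - r) q := by
  set V := hS.1.sortedEigenvectorMatrix
  set μ := hS.1.sortedEigenvalues
  let θ : Fin p → ℝ := fun i => if (i : ℕ) < p - r then 0 else μ i
  refine ⟨V * diagonal θ * star V, posSemidef_conj_diagonal V fun i => ?_, ?_,
    fun M hM hMS => ?_⟩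
  · by_cases hi : (i : ℕ) < p - r
    · simp [θ, hi]
    · simpa [θ, hi] using hS.sortedEigenvalues_nonneg i
  · refine (rank_mul_le_left _ _).trans <| (rank_mul_le_right _ _).trans ?_
    rw [rank_diagonal, Fintype.card_subtype]
    calc #{i | θ i ≠ 0} ≤ #{i : Fin p | ¬ (i : ℕ) < p - r} :=
          card_le_card fun i hi => by
            simp only [mem_filter, mem_univ, true_and] at hi ⊢
            exact fun h => hi (by simp [θ, h])
      _ ≤ r := by
        rw [filter_not, card_sdiff_of_subset (filter_subset _ _), Fin.card_filter_val_lt,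
          card_univ, Fintype.card_fin]
        omega
  · have hMdiag : M = V * diagonal (μ - θ) * star V := by
      rw [hMS, hS.1.eq_conj_diagonal_sortedEigenvalues, ← Matrix.sub_mul, ← Matrix.mul_sub,
        diagonal_sub]
      rfl
    rw [hM.sum_comp_eigenvalues_of_eq_conj_diagonal hS.1.sortedEigenvectorMatrix_mem_unitaryGroup
      hMdiag (fun x => |x| ^ q), IsHermitian.sumRpowSmallestEigenvalues, sum_filter]
    refine sum_congr rfl fun i _ => ?_
    by_cases hi : (i : ℕ) < p - r
    · simp [θ, hi, abs_of_nonneg (hS.sortedEigenvalues_nonneg i), μ]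
    · simp [θ, hi, Real.zero_rpow hq]

theorem PosSemidef.sumRpowSmallestEigenvalues_le_trace_mul_matrixRpow (hS : S.PosSemidef)
    {q : ℝ} (hq : 0 ≤ q) {k : ℕ} (hk : k ≤ p) {W : Matrix (Fin p) (Fin p) ℝ}
    (hW : W.PosSemidef) (hW1 : (1 - W).PosSemidef) (hWt : W.trace = k) :
    hS.1.sumRpowSmallestEigenvalues k q ≤ (W * matrixRpow hS.1 q).trace := by
  have hV := hS.1.sortedEigenvectorMatrix_mem_unitaryGroup
  have hdiag := diag_conj_nonneg_and_le_one hW hW1 hV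
  rw [hS.1.matrixRpow_eq, trace_mul_conj_diagonal]
  refine sum_filter_lt_le_sum_mul hk (fun a b hab => Real.rpow_le_rpow
    (hS.sortedEigenvalues_nonneg a) (hS.1.monotone_sortedEigenvalues hab) hq)
    (fun i => (hdiag i).1) (fun i => (hdiag i).2) ?_
  rw [← hWt, ← trace_star_mul_mul hV W]
  rfl

theorem IsHermitian.exists_trace_mul_matrixRpow_eq_sumRpowSmallestEigenvalues
    (hS : S.IsHermitian) (q : ℝ) {k : ℕ} (hk : k ≤ p) :
    ∃ W : Matrix (Fin p) (Fin p) ℝ, W.PosSemidef ∧ (1 - W).PosSemidef ∧ W.trace = k ∧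
      (W * matrixRpow hS q).trace = hS.sumRpowSmallestEigenvalues k q := by
  have hV := hS.sortedEigenvectorMatrix_mem_unitaryGroup
  let w : Fin p → ℝ := fun i => if (i : ℕ) < k then 1 else 0
  refine ⟨hS.sortedEigenvectorMatrix * diagonal w * star hS.sortedEigenvectorMatrix,
    posSemidef_conj_diagonal _ fun i => ?_, ?_, ?_, ?_⟩
  · by_cases hi : (i : ℕ) < k <;> simp [w, hi]
  · rw [one_sub_conj_diagonal hV]
    refine posSemidef_conj_diagonal _ fun i => ?_
    by_cases hi : (i : ℕ) < k <;> simp [w, hi]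
  · rw [trace_conj_diagonal hV, ← sum_filter]
    simp [Fin.card_filter_val_lt, hk]
  · rw [hS.matrixRpow_eq, conj_diagonal_mul_conj_diagonal hV, trace_conj_diagonal hV,
      IsHermitian.sumRpowSmallestEigenvalues, sum_filter]
    refine sum_congr rfl fun i _ => ?_
    by_cases hi : (i : ℕ) < k <;> simp [w, hi]

end Matrix

theorem fa_trace_reformulation_general {p r : ℕ} (q : ℝ) (hq : 1 ≤ q)
    (Sig : Matrix (Fin p) (Fin p) ℝ) (hSig : Sig.PosSemidef) :
    sInf {v : ℝ | ∃ (Θ Phi : Matrix (Fin p) (Fin p) ℝ)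
        (hΘ : Θ.PosSemidef) (hPhi : Phi.PosSemidef),
        Θ.rank ≤ r ∧ Phi.IsDiag ∧ (Sig - Phi).PosSemidef ∧
        v = ∑ i, |((hSig.1.sub hΘ.1).sub hPhi.1).eigenvalues i| ^ q} =
    sInf {v : ℝ | ∃ (Phi W : Matrix (Fin p) (Fin p) ℝ)
        (hSPhi : (Sig - Phi).PosSemidef),
        Phi.IsDiag ∧ Phi.PosSemidef ∧ W.PosSemidef ∧ (1 - W).PosSemidef ∧
        W.trace = ((p - r : ℕ) : ℝ) ∧ v = (W * matrixRpow hSPhi.1 q).trace} := by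
  have hq0 : 0 ≤ q := zero_le_one.trans hq
  apply csInf_eq_csInf_of_forall_exists_le
  · rintro _ ⟨Θ, Phi, hΘ, hPhi, hrank, hdiag, hSPhi, rfl⟩
    obtain ⟨W, hW, hW1, hWt, hWval⟩ :=
      hSPhi.1.exists_trace_mul_matrixRpow_eq_sumRpowSmallestEigenvalues q (p.sub_le r)
    refine ⟨_, ⟨Phi, W, hSPhi, hdiag, hPhi, hW, hW1, hWt, rfl⟩, ?_⟩
    rw [hWval]
    exact hSPhi.sumRpowSmallestEigenvalues_le_sum_abs_rpow hq0 hrank _ (sub_right_comm _ _ _)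
  · rintro _ ⟨Phi, W, hSPhi, hdiag, hPhi, hW, hW1, hWt, rfl⟩
    obtain ⟨Θ, hΘ, hrank, hval⟩ :=
      hSPhi.exists_sum_abs_rpow_eq_sumRpowSmallestEigenvalues (by positivity) r
    refine ⟨_, ⟨Θ, Phi, hΘ, hPhi, hrank, hdiag, hSPhi, rfl⟩, ?_⟩
    rw [hval _ _ (sub_right_comm _ _ _)]
    exact hSPhi.sumRpowSmallestEigenvalues_le_trace_mul_matrixRpow hq0 (p.sub_le r) hW hW1 hWt

/-- Equivalence of the rank-constrained FA problem with its trace reformulation: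
the minimum of `‖Σ - Θ - Φ‖_q^q` over PSD `Θ` of rank at most `r` and diagonal
PSD `Φ` with `Σ - Φ ⪰ 0` equals the minimum of `Tr(W (Σ - Φ)^q)` over such `Φ`
and symmetric `W` with `0 ⪯ W ⪯ I`, `Tr W = p - r`. -/
theorem fa_trace_reformulation {p r : ℕ} (hr : r < p) (q : ℝ) (hq : 1 ≤ q)
    (Sig : Matrix (Fin p) (Fin p) ℝ) (hSig : Sig.PosSemidef) :
    sInf {v : ℝ | ∃ (Θ Phi : Matrix (Fin p) (Fin p) ℝ)
        (hΘ : Θ.PosSemidef) (hPhi : Phi.PosSemidef),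
        Θ.rank ≤ r ∧ Phi.IsDiag ∧ (Sig - Phi).PosSemidef ∧
        v = ∑ i, |((hSig.1.sub hΘ.1).sub hPhi.1).eigenvalues i| ^ q} =
    sInf {v : ℝ | ∃ (Phi W : Matrix (Fin p) (Fin p) ℝ)
        (hSPhi : (Sig - Phi).PosSemidef),
        Phi.IsDiag ∧ Phi.PosSemidef ∧ W.PosSemidef ∧ (1 - W).PosSemidef ∧
        W.trace = ((p - r : ℕ) : ℝ) ∧ v = (W * matrixRpow hSPhi.1 q).trace} :=
  fa_trace_reformulation_general q hq Sig hSig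
end
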